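/- arXiv:1408.4188 — 6 statements merged into one kernel-verified Lean document; each statement's English description precedes it below -/
import Mathlib

section
/- If κ is an infinite cardinal with κ^{<κ} = κ, then there is a universal graph on κ, i.e. a graph with vertex set κ containing an isomorphic induced copy of every graph with vertex set κ. -/
open Cardinal Set
open scoped Ordinal

/-!
Well-order the vertices in type `κ`. A vertex of a graph on `κ` is then described by its position
`x < κ` together with its set of neighbours below `x`; two vertices are adjacent iff the earlier
one lies in the later one's set. Taking all such pairs as vertices gives a graph into which every
graph on `κ` embeds, and it has `∑_{x < κ} 2^|x| ≤ κ · 2^{<κ} = κ` vertices.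
-/

namespace SimpleGraph

/-- A vertex `⟨x, s⟩` sits at position `x` and is adjacent to the earlier vertices at positions
in `s`. -/
def downsetPattern (I : Type*) [LinearOrder I] : SimpleGraph (Σ x : I, Set (Iio x)) where
  Adj a b := (∃ h : a.1 < b.1, ⟨a.1, h⟩ ∈ b.2) ∨ ∃ h : b.1 < a.1, ⟨b.1, h⟩ ∈ a.2
  symm := ⟨fun _ _ => Or.symm⟩
  loopless := ⟨fun _ => by rintro (⟨h, _⟩ | ⟨h, _⟩) <;> exact lt_irrefl _ h⟩

variable {α I : Type*} [LinearOrder I]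

def Embedding.toDownsetPattern (G : SimpleGraph α) (f : α ↪ I) : G ↪g downsetPattern I where
  toFun a := ⟨f a, {p | ∃ b, f b = p ∧ G.Adj b a}⟩
  inj' _ _ h := f.injective (congrArg Sigma.fst h)
  map_rel_iff' {a b} := by
    change (_ ∨ _) ↔ _
    constructor
    · rintro (⟨_, c, hc, hcb⟩ | ⟨_, c, hc, hca⟩)
      · exact f.injective hc ▸ hcb
      · exact (f.injective hc ▸ hca).symm
    · intro hab
      rcases (f.injective.ne (G.ne_of_adj hab)).lt_or_gt with h | h
      · exact Or.inl ⟨h, a, rfl, hab⟩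
      · exact Or.inr ⟨h, b, rfl, hab.symm⟩

end SimpleGraph

theorem Cardinal.mk_sigma_set_Iio_le {α : Type*} [LinearOrder α] [WellFoundedLT α]
    (hord : (#α).ord = typeLT α) (hα : ℵ₀ ≤ #α) (hpow : 2 ^< #α ≤ #α) :
    #(Σ x : α, Set (Iio x)) ≤ #α :=
  calc #(Σ x : α, Set (Iio x)) = sum fun x : α => 2 ^ #(Iio x) := by simp only [mk_sigma, mk_set]
    _ ≤ sum fun _ : α => #α :=
      sum_le_sum _ _ fun x => (le_powerlt 2 (mk_Iio_lt x hord)).trans hpow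
    _ = #α := by rw [sum_const', mul_eq_self hα]

/-- If `κ` is an infinite cardinal with `κ^{<κ} = κ`, then there is a universal graph on `κ`:
a graph with vertex set (of cardinality) `κ` containing an isomorphic induced copy of every
graph with vertex set `κ`. -/
theorem stmt2 (κ : Cardinal.{u}) (hκ : ℵ₀ ≤ κ) (hpow : κ ^< κ = κ)
    (V : Type u) (hV : #V = κ) :
    ∃ H : SimpleGraph V, ∀ G : SimpleGraph V, Nonempty (G ↪g H) := by
  set I := κ.ord.ToType
  have hI : #I = κ := mk_ord_toType κ
  have two_powerlt : 2 ^< κ ≤ κ := powerlt_le.2 fun μ hμ =>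
    calc 2 ^ μ ≤ κ ^ μ := power_le_power_right ((natCast_lt_aleph0 (n := 2)).le.trans hκ)
      _ ≤ κ := (le_powerlt κ hμ).trans hpow.le
  obtain ⟨e⟩ : #(Σ x : I, Set (Iio x)) ≤ #V :=
    (mk_sigma_set_Iio_le (by simp [I]) (hI ▸ hκ) (hI ▸ two_powerlt)).trans
      (hI.trans hV.symm).le
  obtain ⟨f⟩ : Nonempty (V ↪ I) := (hV.trans hI.symm).le
  exact ⟨(SimpleGraph.downsetPattern I).map e, fun G =>
    ⟨(SimpleGraph.Embedding.map e _).comp (SimpleGraph.Embedding.toDownsetPattern G f)⟩⟩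
end

section
/- For every U-constraint H and every element b of the Boolean algebra B_0, there is a U-constraint H' ≤_U H such that either b ∈ Fil(H') or ¬b ∈ Fil(H'). -/
open Filter Set

universe u

variable {X I 𝔹 : Type u}

/-- The domain of `b(H,A)`: `{κ_x : x ∈ dom(H) ∩ A}`.  Here `X` plays the role of
`P_κ(λ)`, `κx : X → I` is the map `x ↦ κ_x = x ∩ κ`, and `DH = dom(H)`. -/
def bdom (κx : X → I) (DH A : Set X) : Set I := κx '' (DH ∩ A)

/-- The value `b(H,A)(i) = ⋁ {H(x) : x ∈ dom(H) ∩ A, κ_x = i}`, a Boolean supremum in the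
complete Boolean algebra `𝔹` (an ambient algebra containing the algebras `B(α,κ)`). -/
def bval [CompleteBooleanAlgebra 𝔹] (κx : X → I) (DH : Set X) (H : X → 𝔹)
    (A : Set X) (i : I) : 𝔹 :=
  sSup (H '' {x | x ∈ DH ∩ A ∧ κx x = i})

/-- `[h]_{U₀} ∈ Fil(H)`: the filter `Fil(H)` on `B₀` is generated by the (downward directed)
base `{[b(H,A)]_{U₀} : A ∈ U}`, so membership means that `[b(H,A)]_{U₀} ≤ [h]_{U₀}` for some
`A ∈ U`.  Here `U₀ = U.map κx` is the projection of `U` to `κ`, an element of `B₀` is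
represented by a function `h : I → 𝔹`, and `≤` is computed `U₀`-almost everywhere (on the
domain of `b(H,A)`). -/
def FilMem [CompleteBooleanAlgebra 𝔹] (U : Ultrafilter X) (κx : X → I)
    (DH : Set X) (H : X → 𝔹) (h : I → 𝔹) : Prop :=
  ∃ A ∈ U, {i | i ∈ bdom κx DH A ∧ bval κx DH H A i ≤ h i} ∈ U.map κx

/-- Decision lemma: for every `U`-constraint `H` (a function with domain `DH ∈ U`, taking a
nonzero value `H(x)` in the algebra `Bsub (κ_x)` — abstracting `B(κ_x,κ)` — at each
`x ∈ DH`) and every element `b = [f]_{U₀}` of the Boolean algebra `B₀`, there is a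
`U`-constraint `H' ≤_U H` such that either `b ∈ Fil(H')` or `¬b ∈ Fil(H')`. -/
theorem stmt8 [CompleteBooleanAlgebra 𝔹] (U : Ultrafilter X) (κx : X → I)
    (Bsub : I → Set 𝔹)
    (hinf : ∀ i, ∀ a ∈ Bsub i, ∀ b ∈ Bsub i, a ⊓ b ∈ Bsub i)
    (hcompl : ∀ i, ∀ a ∈ Bsub i, aᶜ ∈ Bsub i)
    (DH : Set X) (H : X → 𝔹) (hDH : DH ∈ U)
    (hmem : ∀ x ∈ DH, H x ∈ Bsub (κx x)) (hne : ∀ x ∈ DH, H x ≠ ⊥)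
    (f : I → 𝔹) (hf : ∀ i, f i ∈ Bsub i) :
    ∃ (D' : Set X) (H' : X → 𝔹), D' ∈ U ∧
      {x | x ∈ D' ∧ x ∈ DH ∧ H' x ≤ H x} ∈ U ∧
      (∀ x ∈ D', H' x ∈ Bsub (κx x) ∧ H' x ≠ ⊥) ∧
      (FilMem U κx D' H' f ∨ FilMem U κx D' H' (fun i => (f i)ᶜ)) := by
  classical
  by_cases hA : {x | x ∈ DH ∧ H x ⊓ f (κx x) ≠ ⊥} ∈ U
  · refine ⟨_, fun x => H x ⊓ f (κx x), hA, ?_, ?_, Or.inl ?_⟩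
    · filter_upwards [hA] with x hx
      exact ⟨hx, hx.1, inf_le_left⟩
    · rintro x ⟨hx1, hx2⟩
      exact ⟨hinf _ _ (hmem x hx1) _ (hf _), hx2⟩
    · refine ⟨_, hA, ?_⟩
      rw [Ultrafilter.mem_map]
      refine Filter.mem_of_superset hA ?_
      intro x hx
      refine ⟨⟨x, ⟨hx, hx⟩, rfl⟩, ?_⟩
      apply sSup_le
      rintro b ⟨y, ⟨_, hyk⟩, rfl⟩
      exact hyk ▸ (inf_le_right : H y ⊓ f (κx y) ≤ f (κx y))
  · have hB : {x | x ∈ DH ∧ H x ⊓ f (κx x) = ⊥} ∈ U := by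
      have h1 := (Ultrafilter.compl_mem_iff_notMem).2 hA
      filter_upwards [hDH, h1] with x hx1 hx2
      refine ⟨hx1, ?_⟩
      by_contra h
      exact hx2 ⟨hx1, h⟩
    refine ⟨_, H, hB, ?_, ?_, Or.inr ?_⟩
    · filter_upwards [hB] with x hx
      exact ⟨hx, hx.1, le_rfl⟩
    · rintro x ⟨hx1, _⟩
      exact ⟨hmem x hx1, hne x hx1⟩
    · refine ⟨_, hB, ?_⟩
      rw [Ultrafilter.mem_map]
      refine Filter.mem_of_superset hB ?_
      intro x hx
      refine ⟨⟨x, ⟨hx, hx⟩, rfl⟩, ?_⟩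
      apply sSup_le
      rintro b ⟨y, ⟨⟨_, hy⟩, hyk⟩, rfl⟩
      rw [← hyk]
      exact le_compl_iff_disjoint_right.2 (disjoint_iff.2 hy.2)
end

section
/- Suppose every ≤_U-decreasing sequence of U-constraints of length at most 2^κ has a ≤_U-lower bound, and |B_0| = 2^κ. Then for every U-constraint H there is H' ≤_U H such that Fil(H') is an ultrafilter on B_0. -/
open Filter Set

universe u

variable {X I 𝔹 : Type u}

/-- A `U`-constraint: a function `H` with domain `D ∈ U` whose value at `x` is a nonzero
element of the algebra `Bsub (κ_x)` (abstracting `H(x) ∈ C(κ_x,κ) ⊆ B(κ_x,κ)`). -/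
structure UConstraint [CompleteBooleanAlgebra 𝔹] (U : Ultrafilter X) (κx : X → I)
    (Bsub : I → Set 𝔹) where
  D : Set X
  H : X → 𝔹
  D_mem : D ∈ U
  val_mem : ∀ x ∈ D, H x ∈ Bsub (κx x)
  ne_bot : ∀ x ∈ D, H x ≠ ⊥

/-- `c ≤_U d`: `c(x) ≤ d(x)` for `U`-almost every `x`. -/
def leU [CompleteBooleanAlgebra 𝔹] {U : Ultrafilter X} {κx : X → I} {Bsub : I → Set 𝔹}
    (c d : UConstraint U κx Bsub) : Prop :=
  {x | x ∈ c.D ∧ x ∈ d.D ∧ c.H x ≤ d.H x} ∈ U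

/-!
Enumerate `B₀` as `(e ζ)_{ζ < 2^κ}` and build by transfinite recursion a `≤_U`-decreasing
sequence of constraints below `H`: at stage `ζ` take a lower bound of the earlier stages
(this is where the hypothesis on sequences of length `≤ 2^κ` enters) and strengthen it to decide
`e ζ`. A lower bound `H'` of the whole sequence decides every element, since `Fil` is antitone
in the constraint, and `Fil(H')` is proper because the values of `H'` are nonzero.
-/

section TransfiniteRefinement

variable {α : Type*} [Preorder α] {μ : Ordinal.{u}}

open Ordinal

theorem exists_le_forall_lt_of_antitoneOn {o : Ordinal.{u}}
    (hlb : ∀ g : o.ToType → α, Antitone g → ∃ d, ∀ p, d ≤ g p)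
    {f : Ordinal.{u} → α} (hf : AntitoneOn f (Iio o)) {c : α} (hfc : ∀ a < o, f a ≤ c) :
    ∃ d ≤ c, ∀ a < o, d ≤ f a := by
  rcases eq_zero_or_pos o with rfl | ho
  · exact ⟨c, le_rfl, fun a ha => (not_lt_zero ha).elim⟩
  obtain ⟨d, hd⟩ := hlb (fun p => f (ToType.mk.symm p)) fun p q hpq =>
    hf (ToType.mk.symm p).2 (ToType.mk.symm q).2 (ToType.mk.symm.monotone hpq)
  have hdf : ∀ a (ha : a < o), d ≤ f a := fun a ha => by
    simpa using hd (ToType.mk ⟨a, ha⟩)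
  exact ⟨d, (hdf 0 ho).trans (hfc 0 ho), hdf⟩

noncomputable def refineSeq (P : Ordinal.{u} → α → Prop) (c : α) : Ordinal.{u} → α :=
  Ordinal.lt_wf.fix fun o s =>
    @Classical.epsilon α ⟨c⟩ fun d => d ≤ c ∧ (∀ a (ha : a < o), d ≤ s a ha) ∧ P o d

theorem refineSeq_spec (hlb : ∀ o ≤ μ, ∀ g : o.ToType → α, Antitone g → ∃ d, ∀ p, d ≤ g p)
    {P : Ordinal.{u} → α → Prop} (hP : ∀ o < μ, ∀ a, ∃ b ≤ a, P o b) (c : α) :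
    ∀ o < μ, refineSeq P c o ≤ c ∧ (∀ a < o, refineSeq P c o ≤ refineSeq P c a) ∧
      P o (refineSeq P c o) := by
  intro o
  induction o using WellFoundedLT.induction with
  | _ o ih =>
    intro ho
    have hanti : AntitoneOn (refineSeq P c) (Iio o) := antitoneOn_iff_forall_lt.2
      fun a _ b hb hab => (ih b hb (hb.trans ho)).2.1 a hab
    obtain ⟨d₀, hd₀c, hd₀⟩ := exists_le_forall_lt_of_antitoneOn (hlb o ho.le) hanti
      fun a ha => (ih a ha (ha.trans ho)).1
    obtain ⟨d, hdd₀, hd⟩ := hP o ho d₀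
    rw [refineSeq, Ordinal.lt_wf.fix_eq]
    exact Classical.epsilon_spec (p := fun d => d ≤ c ∧ (∀ a < o, d ≤ refineSeq P c a) ∧ P o d)
      ⟨d, hdd₀.trans hd₀c, fun a ha => hdd₀.trans (hd₀ a ha), hd⟩

theorem exists_le_forall_lt_of_exists_le
    (hlb : ∀ o ≤ μ, ∀ g : o.ToType → α, Antitone g → ∃ d, ∀ p, d ≤ g p)
    {P : Ordinal.{u} → α → Prop} (hP : ∀ o < μ, ∀ a, ∃ b ≤ a, P o b)
    (hmono : ∀ o ⦃a b⦄, a ≤ b → P o b → P o a) (c : α) :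
    ∃ c' ≤ c, ∀ o < μ, P o c' := by
  have hspec := refineSeq_spec hlb hP c
  have hanti : AntitoneOn (refineSeq P c) (Iio μ) := antitoneOn_iff_forall_lt.2
    fun a _ b hb hab => (hspec b hb).2.1 a hab
  obtain ⟨c', hc'c, hc'⟩ := exists_le_forall_lt_of_antitoneOn (hlb μ le_rfl) hanti
    fun a ha => (hspec a ha).1
  exact ⟨c', hc'c, fun o ho => hmono o (hc' o ho) (hspec o ho).2.2⟩

theorem exists_le_forall_of_exists_le
    (hlb : ∀ o ≤ μ, ∀ g : o.ToType → α, Antitone g → ∃ d, ∀ p, d ≤ g p)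
    {P : μ.ToType → α → Prop} (hP : ∀ ζ a, ∃ b ≤ a, P ζ b)
    (hmono : ∀ ζ ⦃a b⦄, a ≤ b → P ζ b → P ζ a) (c : α) :
    ∃ c' ≤ c, ∀ ζ, P ζ c' := by
  obtain ⟨c', hc'c, hc'⟩ := exists_le_forall_lt_of_exists_le hlb
    (P := fun o d => ∀ h : o < μ, P (ToType.mk ⟨o, h⟩) d)
    (fun o ho a => (hP (ToType.mk ⟨o, ho⟩) a).imp fun b hb => ⟨hb.1, fun _ => hb.2⟩)
    (fun o a b hab hb h => hmono _ hab (hb h)) c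
  refine ⟨c', hc'c, fun ζ => ?_⟩
  have hζ : (ToType.mk.symm ζ : Ordinal) < μ := (ToType.mk.symm ζ).2
  exact ToType.mk.apply_symm_apply ζ ▸ hc' _ hζ hζ

end TransfiniteRefinement

section UConstraint

variable [CompleteBooleanAlgebra 𝔹] {U : Ultrafilter X} {κx : X → I} {Bsub : I → Set 𝔹}

instance : Preorder (UConstraint U κx Bsub) where
  le := leU
  le_refl c := mem_of_superset c.D_mem fun _ hx => ⟨hx, hx, le_rfl⟩
  le_trans _ _ _ hab hbc := mem_of_superset (inter_mem hab hbc) fun _ hx =>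
    ⟨hx.1.1, hx.2.2.1, hx.1.2.2.trans hx.2.2.2⟩

theorem bdom_mem_map {D A : Set X} (hD : D ∈ U) (hA : A ∈ U) : bdom κx D A ∈ U.map κx :=
  Ultrafilter.mem_map.2 <| mem_of_superset (inter_mem hD hA) (subset_preimage_image _ _)

theorem le_bval {D A : Set X} {H : X → 𝔹} {x : X} (hx : x ∈ D ∩ A) :
    H x ≤ bval κx D H A (κx x) :=
  le_sSup ⟨x, ⟨hx, rfl⟩, rfl⟩

theorem bval_mono {D D' A A' : Set X} {H H' : X → 𝔹}
    (h : ∀ x ∈ D ∩ A, x ∈ D' ∩ A' ∧ H x ≤ H' x) (i : I) :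
    bval κx D H A i ≤ bval κx D' H' A' i :=
  sSup_le <| by
    rintro _ ⟨x, ⟨hx, rfl⟩, rfl⟩
    exact (h x hx).2.trans (le_bval (h x hx).1)

theorem filMem_of_forall_le {D : Set X} {H : X → 𝔹} {g : I → 𝔹} (hD : D ∈ U)
    (h : ∀ x ∈ D, H x ≤ g (κx x)) : FilMem U κx D H g := by
  refine ⟨univ, univ_mem, mem_of_superset (bdom_mem_map hD univ_mem) fun i hi => ⟨hi, ?_⟩⟩
  refine sSup_le ?_
  rintro _ ⟨x, ⟨hx, rfl⟩, rfl⟩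
  exact h x hx.1

theorem filMem_congr {D : Set X} {H : X → 𝔹} {f g : I → 𝔹} (hfg : f =ᶠ[U.map κx] g)
    (hf : FilMem U κx D H f) : FilMem U κx D H g := by
  obtain ⟨A, hA, hS⟩ := hf
  exact ⟨A, hA, mem_of_superset (inter_mem hS hfg) fun i hi => ⟨hi.1.1, hi.1.2.trans_eq hi.2⟩⟩

theorem filMem_of_le {c d : UConstraint U κx Bsub} (hcd : c ≤ d) {g : I → 𝔹}
    (hd : FilMem U κx d.D d.H g) : FilMem U κx c.D c.H g := by
  obtain ⟨A, hA, hS⟩ := hd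
  have hcdA : ∀ x ∈ c.D ∩ (A ∩ {x | x ∈ c.D ∧ x ∈ d.D ∧ c.H x ≤ d.H x}),
      x ∈ d.D ∩ A ∧ c.H x ≤ d.H x := fun x hx => ⟨⟨hx.2.2.2.1, hx.2.1⟩, hx.2.2.2.2⟩
  refine ⟨_, inter_mem hA hcd, mem_of_superset
    (inter_mem hS (bdom_mem_map c.D_mem (inter_mem hA hcd))) fun i hi => ⟨hi.2, ?_⟩⟩
  exact (bval_mono hcdA i).trans hi.1.2

theorem not_filMem_bot (c : UConstraint U κx Bsub) :
    ¬ FilMem U κx c.D c.H fun _ => ⊥ := by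
  rintro ⟨A, hA, hS⟩
  obtain ⟨_, ⟨x, hx, rfl⟩, hle⟩ := (U.map κx).nonempty_of_mem hS
  exact c.ne_bot x hx.1 (le_bot_iff.1 ((le_bval hx).trans hle))

def UConstraint.restrict (c : UConstraint U κx Bsub) {S : Set X} (hS : S ∈ U) :
    UConstraint U κx Bsub where
  D := c.D ∩ S
  H := c.H
  D_mem := inter_mem c.D_mem hS
  val_mem x hx := c.val_mem x hx.1
  ne_bot x hx := c.ne_bot x hx.1

theorem UConstraint.restrict_le (c : UConstraint U κx Bsub) {S : Set X} (hS : S ∈ U) :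
    c.restrict hS ≤ c :=
  mem_of_superset (c.restrict hS).D_mem fun _ hx => ⟨hx, hx.1, le_rfl⟩

/-- Either `H ⊓ f` stays nonzero on a `U`-large set, and then it is a stronger constraint
forcing `f`, or `H ≤ fᶜ` on a `U`-large set. -/
theorem exists_le_filMem_or_filMem_compl
    (hinf : ∀ i, ∀ a ∈ Bsub i, ∀ b ∈ Bsub i, a ⊓ b ∈ Bsub i)
    (c : UConstraint U κx Bsub) {f : I → 𝔹} (hf : ∀ i, f i ∈ Bsub i) :
    ∃ c' ≤ c, FilMem U κx c'.D c'.H f ∨ FilMem U κx c'.D c'.H fun i => (f i)ᶜ := by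
  set S : Set X := {x | x ∈ c.D ∧ c.H x ⊓ f (κx x) ≠ ⊥}
  by_cases hS : S ∈ U
  · let c' : UConstraint U κx Bsub :=
      { D := S
        H := fun x => c.H x ⊓ f (κx x)
        D_mem := hS
        val_mem := fun x hx => hinf _ _ (c.val_mem x hx.1) _ (hf _)
        ne_bot := fun x hx => hx.2 }
    exact ⟨c', mem_of_superset hS fun x hx => ⟨hx, hx.1, inf_le_left⟩,
      Or.inl (filMem_of_forall_le hS fun _ _ => inf_le_right)⟩
  · have hSc : Sᶜ ∈ U := Ultrafilter.compl_mem_iff_notMem.2 hS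
    refine ⟨c.restrict hSc, c.restrict_le hSc, Or.inr (filMem_of_forall_le
      (c.restrict hSc).D_mem fun x hx => ?_)⟩
    have hdisj : c.H x ⊓ f (κx x) = ⊥ := not_not.1 fun hne => hx.2 ⟨hx.1, hne⟩
    exact le_compl_iff_disjoint_right.2 (disjoint_iff.2 hdisj)

end UConstraint

theorem stmt9_general [CompleteBooleanAlgebra 𝔹] (U : Ultrafilter X) (κx : X → I)
    (Bsub : I → Set 𝔹) (κ : Cardinal.{u})
    (hinf : ∀ i, ∀ a ∈ Bsub i, ∀ b ∈ Bsub i, a ⊓ b ∈ Bsub i)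
    (hlb : ∀ o : Ordinal.{u}, o ≤ ((2 ^ κ : Cardinal.{u})).ord →
      ∀ g : o.ToType → UConstraint U κx Bsub,
        (∀ p q : o.ToType, p ≤ q → leU (g q) (g p)) →
        ∃ c, ∀ p, leU c (g p))
    (henum : ∃ e : (((2 ^ κ : Cardinal.{u})).ord).ToType → (I → 𝔹),
        (∀ ζ i, e ζ i ∈ Bsub i) ∧
        ∀ f : I → 𝔹, (∀ i, f i ∈ Bsub i) → ∃ ζ, {i | e ζ i = f i} ∈ U.map κx) :
    ∀ c : UConstraint U κx Bsub, ∃ c' : UConstraint U κx Bsub, leU c' c ∧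
      (¬ FilMem U κx c'.D c'.H (fun _ => (⊥ : 𝔹))) ∧
      (∀ f : I → 𝔹, (∀ i, f i ∈ Bsub i) →
        FilMem U κx c'.D c'.H f ∨ FilMem U κx c'.D c'.H (fun i => (f i)ᶜ)) := by
  intro c
  obtain ⟨e, he_mem, he_surj⟩ := henum
  obtain ⟨c', hc'c, hc'⟩ := exists_le_forall_of_exists_le hlb
    (P := fun ζ d => FilMem U κx d.D d.H (e ζ) ∨ FilMem U κx d.D d.H fun i => (e ζ i)ᶜ)
    (fun ζ d => exists_le_filMem_or_filMem_compl hinf d (he_mem ζ))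
    (fun _ _ _ hab => Or.imp (filMem_of_le hab) (filMem_of_le hab)) c
  refine ⟨c', hc'c, not_filMem_bot c', fun f hf => ?_⟩
  obtain ⟨ζ, hζ⟩ := he_surj f hf
  have hζ' : e ζ =ᶠ[U.map κx] f := hζ
  exact (hc' ζ).imp (filMem_congr hζ') (filMem_congr (hζ'.fun_comp compl))

/-- Suppose every `≤_U`-decreasing sequence of `U`-constraints of length at most `2^κ` has a
`≤_U`-lower bound, and `|B₀| = 2^κ` (witnessed by an enumeration of representatives).  Then
for every `U`-constraint `H` there is `H' ≤_U H` such that `Fil(H')` is an ultrafilter on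
`B₀`, i.e. `Fil(H')` is proper and contains `b` or `¬b` for every `b ∈ B₀`. -/
theorem stmt9 [CompleteBooleanAlgebra 𝔹] (U : Ultrafilter X) (κx : X → I)
    (Bsub : I → Set 𝔹) (κ : Cardinal.{u})
    (hinf : ∀ i, ∀ a ∈ Bsub i, ∀ b ∈ Bsub i, a ⊓ b ∈ Bsub i)
    (hcompl : ∀ i, ∀ a ∈ Bsub i, aᶜ ∈ Bsub i)
    (hlb : ∀ o : Ordinal.{u}, o ≤ ((2 ^ κ : Cardinal.{u})).ord →
      ∀ g : o.ToType → UConstraint U κx Bsub,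
        (∀ p q : o.ToType, p ≤ q → leU (g q) (g p)) →
        ∃ c, ∀ p, leU c (g p))
    (henum : ∃ e : (((2 ^ κ : Cardinal.{u})).ord).ToType → (I → 𝔹),
        (∀ ζ i, e ζ i ∈ Bsub i) ∧
        ∀ f : I → 𝔹, (∀ i, f i ∈ Bsub i) → ∃ ζ, {i | e ζ i = f i} ∈ U.map κx) :
    ∀ c : UConstraint U κx Bsub, ∃ c' : UConstraint U κx Bsub, leU c' c ∧
      (¬ FilMem U κx c'.D c'.H (fun _ => (⊥ : 𝔹))) ∧
      (∀ f : I → 𝔹, (∀ i, f i ∈ Bsub i) →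
        FilMem U κx c'.D c'.H f ∨ FilMem U κx c'.D c'.H (fun i => (f i)ᶜ)) :=
  stmt9_general U κx Bsub κ hinf hlb henum
end

section
/- For any U-constraint H, Fil(H) = {b ∈ B_0 : [H]_U ≤_B k(b)}, where k : M_0 → M is the canonical factor embedding with k ∘ j_0 = j. -/
open Filter Set

universe u

variable {X I 𝔹 : Type u}

/-- `Fil(H) = {b ∈ B₀ : [H]_U ≤_B k(b)}`.  The ultrapowers are represented concretely:
`[H]_U` is the germ of `H` over `U`, and for `b = [f]_{U₀} ∈ B₀` the image `k(b) = j(f)(κ)`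
is the germ of `f ∘ κx` over `U` (the canonical factor embedding `k : M₀ → M`,
`k([f]_{U₀}) = j(f)(κ)`, satisfies `k ∘ j₀ = j`); `≤_B` is the `U`-almost-everywhere
ordering on germs. -/
theorem stmt11 [CompleteBooleanAlgebra 𝔹] (U : Ultrafilter X) (κx : X → I)
    (DH : Set X) (H : X → 𝔹) (hDH : DH ∈ U) :
    ∀ f : I → 𝔹,
      FilMem U κx DH H f ↔
        (Filter.Germ.ofFun (l := (↑U : Filter X)) H ≤
          Filter.Germ.ofFun (l := (↑U : Filter X)) (fun x => f (κx x))) := by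
  intro f
  constructor
  · rintro ⟨A, hA, hS⟩
    rw [Filter.Germ.coe_le]
    have hpre : κx ⁻¹' {i | i ∈ bdom κx DH A ∧ bval κx DH H A i ≤ f i} ∈ U := hS
    filter_upwards [hDH, hA, hpre] with x hx hxA hxS
    have hle : H x ≤ bval κx DH H A (κx x) :=
      le_sSup ⟨x, ⟨⟨hx, hxA⟩, rfl⟩, rfl⟩
    exact hle.trans hxS.2
  · intro hle
    rw [Filter.Germ.coe_le] at hle
    have hT : {x | H x ≤ f (κx x)} ∈ U := hle
    refine ⟨DH ∩ {x | H x ≤ f (κx x)}, U.inter_mem hDH hT, ?_⟩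
    have key : ∀ x ∈ DH ∩ {x | H x ≤ f (κx x)},
        κx x ∈ {i | i ∈ bdom κx DH (DH ∩ {x | H x ≤ f (κx x)}) ∧
          bval κx DH H (DH ∩ {x | H x ≤ f (κx x)}) i ≤ f i} := by
      intro x hx
      refine ⟨⟨x, ⟨hx.1, hx⟩, rfl⟩, ?_⟩
      apply sSup_le
      rintro b ⟨y, ⟨⟨-, hy⟩, hyi⟩, rfl⟩
      calc H y ≤ f (κx y) := hy.2
        _ = f (κx x) := by rw [hyi]
    show κx ⁻¹' _ ∈ U
    filter_upwards [U.inter_mem hDH hT] with x hx using key x hx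
end

section
/- (κ-completeness of Fil(H)) Let H be a U-constraint, η < κ, and ⟨h_i : i < η⟩ a sequence of U_0-constraints with [h_i]_{U_0} ∈ Fil(H) for all i < η. Then there is a U_0-constraint h with [h]_{U_0} ∈ Fil(H) and h ≤ h_i (pointwise: dom(h) ⊆ dom(h_i) and h(α) ≤ h_i(α) for all α ∈ dom(h)) for every i < η. -/
open Filter Set

universe u

variable {X I 𝔹 : Type u}

/-- `κ`-completeness lemma for `Fil(H)`: let `H` be a `U`-constraint (`U` being
`κ`-complete), let `η < κ` (represented by an index type `η` of cardinality `< κ`) and let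
`⟨h_i : i < η⟩` be a sequence of `U₀`-constraints with `[h_i]_{U₀} ∈ Fil(H)` for all `i`.
Then there is a `U₀`-constraint `g` with `[g]_{U₀} ∈ Fil(H)` and `g ≤ h_i` pointwise
(`dom(g) ⊆ dom(h_i)` and `g(α) ≤ h_i(α)` for all `α ∈ dom(g)`), for every `i < η`. -/
theorem stmt13 [CompleteBooleanAlgebra 𝔹] (U : Ultrafilter X) (κx : X → I)
    (κ : Cardinal.{u}) (hκ : Cardinal.aleph0 ≤ κ)
    (hcomp : ∀ s : Set (Set X), Cardinal.mk s < κ → (∀ a ∈ s, a ∈ U) → ⋂₀ s ∈ U)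
    (DH : Set X) (H : X → 𝔹) (hDH : DH ∈ U)
    (η : Type u) (hη : Cardinal.mk η < κ)
    (h : η → I → 𝔹) (Dh : η → Set I) (hDh : ∀ e, Dh e ∈ U.map κx)
    (hFil : ∀ e, FilMem U κx DH H (h e)) :
    ∃ (Dg : Set I) (g : I → 𝔹), Dg ∈ U.map κx ∧ FilMem U κx DH H g ∧
      ∀ e, Dg ⊆ Dh e ∧ ∀ i ∈ Dg, g i ≤ h e i := by
  choose A hAU hS using hFil
  set B : Set X := ⋂ e, A e with hB
  have hBU : B ∈ U := by
    have := hcomp (Set.range A) (lt_of_le_of_lt Cardinal.mk_range_le hη)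
      (by rintro a ⟨e, rfl⟩; exact hAU e)
    rwa [Set.sInter_range] at this
  have hmapInt : ∀ (T : η → Set I), (∀ e, T e ∈ U.map κx) → (⋂ e, T e) ∈ U.map κx := by
    intro T hT
    have h1 : ⋂₀ (Set.range fun e => κx ⁻¹' T e) ∈ U :=
      hcomp _ (lt_of_le_of_lt Cardinal.mk_range_le hη)
        (by rintro a ⟨e, rfl⟩; exact hT e)
    rw [Set.sInter_range] at h1
    rw [Ultrafilter.mem_map, Set.preimage_iInter]
    exact h1
  set S : η → Set I := fun e =>
    {i | i ∈ bdom κx DH (A e) ∧ bval κx DH H (A e) i ≤ h e i} with hSdef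
  have hbdomB : bdom κx DH B ∈ U.map κx := by
    rw [Ultrafilter.mem_map]
    exact Filter.mem_of_superset (Filter.inter_mem hDH hBU)
      (fun x hx => ⟨x, hx, rfl⟩)
  refine ⟨bdom κx DH B ∩ ((⋂ e, Dh e) ∩ ⋂ e, S e), bval κx DH H B,
    Filter.inter_mem hbdomB (Filter.inter_mem (hmapInt _ hDh) (hmapInt _ hS)),
    ⟨B, hBU, Filter.mem_of_superset hbdomB (fun i hi => ⟨hi, le_refl _⟩)⟩, ?_⟩
  intro e
  constructor
  · intro i hi
    exact Set.mem_iInter.1 hi.2.1 e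
  · intro i hi
    have hle : bval κx DH H B i ≤ bval κx DH H (A e) i := by
      apply sSup_le_sSup
      apply Set.image_mono
      intro x hx
      exact ⟨⟨hx.1.1, Set.mem_iInter.1 hx.1.2 e⟩, hx.2⟩
    exact hle.trans (Set.mem_iInter.1 hi.2.2 e).2
end

section
/- (Normality of Fil(H)) Let H be a U-constraint, I ⊆ V_κ, and ⟨h_s : s ∈ I⟩ a family of U_0-constraints with [h_s]_{U_0} ∈ Fil(H) for all s ∈ I. Then there is a U_0-constraint h with [h]_{U_0} ∈ Fil(H) such that for every s ∈ I, the restriction h↾{α : s ∈ V_α} is pointwise below h_s. -/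
open Filter Set

universe u

variable {X I 𝔹 : Type u}

/-- Normality lemma for `Fil(H)`: let `H` be a `U`-constraint, let `S` be a set of seeds
(`I ⊆ V_κ` in the paper, with `inV s i` meaning `s ∈ V_i`, so that `inV s (κx x)` means
`s ∈ V_{κ_x}`), and let `⟨h_s : s ∈ S⟩` be a family of `U₀`-constraints with
`[h_s]_{U₀} ∈ Fil(H)` for all `s`.  Assume `U` is normal, i.e. closed under the diagonal
intersections used in the proof.  Then there is a `U₀`-constraint `g` with
`[g]_{U₀} ∈ Fil(H)` such that for every `s`, the restriction `g ⇂ s` of `g` to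
`{α : s ∈ V_α}` is pointwise below `h_s`. -/
theorem stmt14 [CompleteBooleanAlgebra 𝔹] (U : Ultrafilter X) (κx : X → I)
    (S : Type u) (inV : S → I → Prop)
    -- normality of U: diagonal intersections of U-large sets are U-large
    (hnormal : ∀ A : S → Set X, (∀ s, A s ∈ U) →
        {x | ∀ s, inV s (κx x) → x ∈ A s} ∈ U)
    (DH : Set X) (H : X → 𝔹) (hDH : DH ∈ U)
    (h : S → I → 𝔹) (Dh : S → Set I) (hDh : ∀ s, Dh s ∈ U.map κx)
    (hFil : ∀ s, FilMem U κx DH H (h s)) :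
    ∃ (Dg : Set I) (g : I → 𝔹), Dg ∈ U.map κx ∧ FilMem U κx DH H g ∧
      ∀ s, ∀ i ∈ Dg, inV s i → i ∈ Dh s ∧ g i ≤ h s i := by

  choose A hAU hAT using hFil
  set A' : S → Set X := fun s => A s ∩ κx ⁻¹' ({i | i ∈ bdom κx DH (A s) ∧ bval κx DH H (A s) i ≤ h s i} ∩ Dh s) with hA'
  have hA'U : ∀ s, A' s ∈ U := by
    intro s
    exact inter_mem (hAU s) (inter_mem (hAT s) (hDh s))
  have hDiag : {x | ∀ s, inV s (κx x) → x ∈ A' s} ∈ U := hnormal A' hA'U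
  set D : Set X := {x | ∀ s, inV s (κx x) → x ∈ A' s} with hD
  refine ⟨bdom κx DH D, bval κx DH H D, ?_, ?_, ?_⟩
  · -- Dg ∈ U.map κx
    have : DH ∩ D ⊆ κx ⁻¹' (bdom κx DH D) := fun x hx => ⟨x, hx, rfl⟩
    exact Ultrafilter.mem_map.mpr (Filter.mem_of_superset (inter_mem hDH hDiag) this)
  · -- FilMem
    refine ⟨D, hDiag, ?_⟩
    have : DH ∩ D ⊆ κx ⁻¹' {i | i ∈ bdom κx DH D ∧ bval κx DH H D i ≤ bval κx DH H D i} :=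
      fun x hx => ⟨⟨x, hx, rfl⟩, le_rfl⟩
    exact Ultrafilter.mem_map.mpr (Filter.mem_of_superset (inter_mem hDH hDiag) this)
  · rintro s i ⟨x, hx, rfl⟩ hsV
    have hxA' : x ∈ A' s := hx.2 s hsV
    have hT : κx x ∈ {i | i ∈ bdom κx DH (A s) ∧ bval κx DH H (A s) i ≤ h s i} ∩ Dh s := hxA'.2
    refine ⟨hT.2, ?_⟩
    apply sSup_le
    rintro b ⟨y, ⟨⟨hyDH, hyD⟩, hyκ⟩, rfl⟩
    have hyA : y ∈ A s := (hyD s (hyκ ▸ hsV)).1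
    have : H y ≤ bval κx DH H (A s) (κx x) :=
      le_sSup ⟨y, ⟨⟨hyDH, hyA⟩, hyκ⟩, rfl⟩
    exact this.trans hT.1.2
end
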